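/- Achievability form of Theorem 1: Let N be a positive integer, Q > 0, T_LR > 0, κ ∈ (0,1], φ ∈ ℝ with sin φ ≠ 0, and μ_ζ ∈ (0,1), and set T_L = sqrt((1/μ_ζ² − 1) / (2·κ·Q·T_LR·N²·sin²φ)). For a real random variable ε with law N(0, κ·Q·T_LR), every pilot period T with 0 ≤ T ≤ T_L satisfies E[exp(−(N·T·sin φ)²·ε²)] ≥ μ_ζ, i.e. the average received power ratio stays at or above the prescribed drop level μ_ζ. -/

import Mathlib

open MeasureTheory ProbabilityTheory
open scoped NNReal

/-!
For `ε ~ N(0, v)` and `a ≥ 0`, completing the square in the Gaussian density gives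
`E[exp(-a ε²)] = (1 + 2 a v)^(-1/2)`. With `a = (N T sin φ)²` this is a decreasing function
of `T ≥ 0`, and `T_L` is exactly the pilot period at which it equals `μζ`.
-/

lemma hasLaw_of_map_eq {Ω 𝓧 : Type*} [MeasurableSpace Ω] [MeasurableSpace 𝓧] {P : Measure Ω}
    {μ : Measure 𝓧} [NeZero μ] {X : Ω → 𝓧} (h : P.map X = μ) : HasLaw X μ P where
  aemeasurable := aemeasurable_of_map_neZero (h ▸ inferInstance)
  map_eq := h

-- When `1 + 2 a v ≤ 0` both sides are junk `0`: the integrand is not integrable.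
lemma integral_exp_neg_mul_sq_gaussianReal (v : ℝ≥0) (a : ℝ) :
    ∫ x, Real.exp (-a * x ^ 2) ∂gaussianReal 0 v = (√(1 + 2 * a * v))⁻¹ := by
  rcases eq_or_ne v 0 with rfl | hv
  · simp [gaussianReal_zero_var]
  have hv0 : (0 : ℝ) < v := by positivity
  have hdensity : ∀ x, gaussianPDFReal 0 v x • Real.exp (-a * x ^ 2)
      = (√(2 * Real.pi * v))⁻¹ * Real.exp (-(a + (2 * v : ℝ)⁻¹) * x ^ 2) := by
    intro x
    rw [gaussianPDFReal, smul_eq_mul, mul_assoc, ← Real.exp_add]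
    ring_nf
  rw [integral_gaussianReal_eq_integral_smul hv]
  simp only [hdensity]
  rw [integral_const_mul, integral_gaussian, ← Real.sqrt_inv, ← Real.sqrt_mul (by positivity),
    ← Real.sqrt_inv]
  congr 1
  field_simp
  ring

lemma le_inv_sqrt_one_add_mul_sq {m D T : ℝ} (hm₀ : 0 < m) (hm₁ : m ≤ 1) (hD : 0 < D)
    (hT : 0 ≤ T) (hTL : T ≤ √((1 / m ^ 2 - 1) / D)) : m ≤ (√(1 + D * T ^ 2))⁻¹ := by
  have hsq : T ^ 2 ≤ (1 / m ^ 2 - 1) / D := by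
    have h1 : 1 ≤ 1 / m ^ 2 := by rw [one_le_div (by positivity)]; nlinarith
    calc T ^ 2 ≤ √((1 / m ^ 2 - 1) / D) ^ 2 := pow_le_pow_left₀ hT hTL 2
      _ = _ := Real.sq_sqrt (div_nonneg (by linarith) hD.le)
  have hle : 1 + D * T ^ 2 ≤ m⁻¹ ^ 2 := by
    rw [le_div_iff₀ hD] at hsq
    rw [inv_pow, ← one_div]
    linarith
  rw [le_inv_comm₀ hm₀ (by positivity)]
  exact (Real.sqrt_le_left (by positivity)).mpr hle

/-- Achievability form of Theorem 1: for every pilot period `T` with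
`0 ≤ T ≤ T_L`, the average received power ratio `E[exp(−(N T sin φ)² ε²)]`
stays at or above the prescribed drop level `μζ`. -/
theorem beam_locking_time_achievability
    {Ω : Type*} [MeasurableSpace Ω] (μ : Measure Ω) [IsProbabilityMeasure μ]
    (N : ℕ) (hN : 0 < N) (Q T_LR κ : ℝ) (hQ : 0 < Q) (hT_LR : 0 < T_LR)
    (hκ : κ ∈ Set.Ioc (0 : ℝ) 1)
    (φ : ℝ) (hφ : Real.sin φ ≠ 0) (μζ : ℝ) (hμζ : μζ ∈ Set.Ioo (0 : ℝ) 1)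
    (T_L : ℝ)
    (hT_L : T_L = Real.sqrt ((1 / μζ ^ 2 - 1) /
        (2 * κ * Q * T_LR * (N : ℝ) ^ 2 * Real.sin φ ^ 2)))
    (ε : Ω → ℝ) (hε : μ.map ε = gaussianReal 0 (κ * Q * T_LR).toNNReal)
    (T : ℝ) (hT0 : 0 ≤ T) (hTL : T ≤ T_L) :
    μζ ≤ ∫ ω, Real.exp (-((N : ℝ) * T * Real.sin φ) ^ 2 * (ε ω) ^ 2) ∂μ := by
  have hκ₀ := hκ.1
  have hv : (0 : ℝ) ≤ κ * Q * T_LR := by positivity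
  have hD : 0 < 2 * κ * Q * T_LR * (N : ℝ) ^ 2 * Real.sin φ ^ 2 := by positivity
  have hε' : HasLaw ε (gaussianReal 0 (κ * Q * T_LR).toNNReal) μ := hasLaw_of_map_eq hε
  calc μζ ≤ (√(1 + 2 * κ * Q * T_LR * (N : ℝ) ^ 2 * Real.sin φ ^ 2 * T ^ 2))⁻¹ :=
        le_inv_sqrt_one_add_mul_sq hμζ.1 hμζ.2.le hD hT0 (hT_L ▸ hTL)
    _ = (√(1 + 2 * ((N : ℝ) * T * Real.sin φ) ^ 2 * (κ * Q * T_LR).toNNReal))⁻¹ := by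
        rw [Real.coe_toNNReal _ hv]
        ring_nf
    _ = ∫ ω, Real.exp (-((N : ℝ) * T * Real.sin φ) ^ 2 * (ε ω) ^ 2) ∂μ := by
        rw [← integral_exp_neg_mul_sq_gaussianReal, ← hε'.integral_comp (by fun_prop)]
        rfl
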